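/- arXiv:math/0208084 — 4 statements merged into one kernel-verified Lean document; each statement's English description precedes it below -/
import Mathlib

section
/- Let N be a unital C*-algebra and let A be a separable C*-subalgebra of N. Then there exists a separable C*-subalgebra B of N with A ⊆ B ⊆ N and 1 ∈ B such that every tracial state on B is the restriction to B of a tracial state on N. -/
/-- A *tracial state* on a unital C*-algebra `D` is a continuous linear functional
`τ : D → ℂ` with `τ 1 = 1`, taking nonnegative real values on elements of the form
`x* x`, and satisfying the trace identity `τ (a b) = τ (b a)`. -/
def IsTracialState {D : Type*} [NormedRing D] [StarRing D] [NormedAlgebra ℂ D]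
    (τ : D →L[ℂ] ℂ) : Prop :=
  τ 1 = 1 ∧ (∀ x : D, ∃ r : ℝ, 0 ≤ r ∧ τ (star x * x) = r) ∧
    ∀ a b : D, τ (a * b) = τ (b * a)

/-!
Let `K` be the real span of the self-commutators `z z⋆ - z⋆ z` in `N`. A real functional `g` on
`N` with `g 1 = 1` and `g x ≤ dist(x, K)` vanishes on `K` and has norm at most one, so the complex
functional that agrees with `g` on self-adjoint elements is positive (as `‖‖a‖ - a‖ ≤ ‖a‖` for
`a ≥ 0`) and, by polarization, kills all commutators: it is a tracial state.

A tracial state `τ` of `B` is contractive and kills the self-commutators of `B`, so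
`|τ b| ≤ dist(b, K_B)` for the real span `K_B` of those. Hence if `dist(b, K_B) ≤ dist(b, K)` on
`B`, Hahn–Banach extends `Re τ` to such a `g`, and the tracial state built from `g` extends `τ`.
This inequality holds on a separable `B ⊇ A`: each point is within `dist(x, K) + ε` of the span of
finitely many self-commutators, and a countable dense subset of `A`, closed off countably often
under these witnesses and under dense subsets of generated star subalgebras, generates such a `B`.
-/

open Metric Function Set Complex ComplexConjugate ComplexStarModule TopologicalSpace

section SelfCommutator

variable {R : Type*} [Ring R] [StarRing R]

def selfCommutator (z : R) : R := z * star z - star z * z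

lemma isSelfAdjoint_selfCommutator (z : R) : IsSelfAdjoint (selfCommutator z) := by
  simp [IsSelfAdjoint, selfCommutator]

lemma four_smul_commutator_eq [Algebra ℂ R] [StarModule ℂ R] (a b : R) :
    (4 : ℂ) • (a * b - b * a) =
      selfCommutator (a + star b) - selfCommutator (a - star b)
        + I • selfCommutator (a + I • star b) - I • selfCommutator (a - I • star b) := by
  simp only [selfCommutator, star_add, star_sub, star_smul, star_star, Complex.star_def,
    conj_I, mul_add, add_mul, mul_sub, sub_mul, smul_mul_assoc, mul_smul_comm, smul_smul,
    smul_sub, smul_add, neg_smul, neg_mul, mul_neg]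
  match_scalars <;> ring_nf <;> norm_num [I_sq]

end SelfCommutator

namespace IsTracialState

variable {D : Type*} [NormedRing D] [StarRing D] [NormedAlgebra ℂ D] {τ : D →L[ℂ] ℂ}

lemma im_apply_eq_zero (hτ : IsTracialState τ) {h : D} (hh : IsSelfAdjoint h) :
    (τ h).im = 0 := by
  obtain ⟨r, -, hr⟩ := hτ.2.1 (1 + h)
  obtain ⟨s, -, hs⟩ := hτ.2.1 h
  have hexpand : star (1 + h) * (1 + h) = 1 + (2 : ℂ) • h + star h * h := by
    rw [star_add, star_one, hh.star_eq, two_smul]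
    noncomm_ring
  have := congrArg (fun z => (τ z).im) hexpand
  simp only [hr, map_add, map_smul, hs, hτ.1, smul_eq_mul] at this
  simpa using this

lemma apply_star [StarModule ℂ D] (hτ : IsTracialState τ) (y : D) : τ (star y) = conj (τ y) := by
  have hre := hτ.im_apply_eq_zero (ℜ y).2
  have him := hτ.im_apply_eq_zero (ℑ y).2
  rw [← realPart_add_I_smul_imaginaryPart y]
  simp only [star_add, star_smul, (ℜ y).2.star_eq, (ℑ y).2.star_eq, map_add, map_smul,
    smul_eq_mul, map_mul, conj_I, Complex.star_def]
  apply Complex.ext <;> simp [hre, him]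

lemma norm_apply_sq_le [StarModule ℂ D] (hτ : IsTracialState τ) (y : D) :
    ‖τ y‖ ^ 2 ≤ (τ (star y * y)).re := by
  set t := τ y
  obtain ⟨r, hr, hτr⟩ := hτ.2.1 (y - t • 1)
  have hexpand : star (y - t • 1) * (y - t • 1)
      = star y * y - t • star y - conj t • y + (conj t * t) • 1 := by
    simp only [star_sub, star_smul, star_one, sub_mul, mul_sub, mul_one, one_mul,
      smul_mul_assoc, mul_smul_comm, starRingEnd_apply]
    module
  rw [hexpand] at hτr
  simp only [map_add, map_sub, map_smul, smul_eq_mul, hτ.1, mul_one, hτ.apply_star] at hτr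
  have := congrArg Complex.re hτr
  simp [Complex.sq_norm, Complex.normSq_apply] at this ⊢
  nlinarith

lemma opNorm_le_one [StarModule ℂ D] [CStarRing D] (hτ : IsTracialState τ) : ‖τ‖ ≤ 1 := by
  have hbound (y : D) : ‖τ y‖ ≤ √‖τ‖ * ‖y‖ := by
    rw [← Real.sqrt_sq (norm_nonneg y), ← Real.sqrt_mul (norm_nonneg τ)]
    refine Real.le_sqrt_of_sq_le ?_
    calc ‖τ y‖ ^ 2 ≤ (τ (star y * y)).re := hτ.norm_apply_sq_le y
      _ ≤ ‖τ (star y * y)‖ := Complex.re_le_norm _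
      _ ≤ ‖τ‖ * ‖star y * y‖ := τ.le_opNorm _
      _ = ‖τ‖ * ‖y‖ ^ 2 := by rw [CStarRing.norm_star_mul_self, sq]
  have h := τ.opNorm_le_bound (Real.sqrt_nonneg _) hbound
  nlinarith [Real.sq_sqrt (norm_nonneg τ), Real.sqrt_nonneg ‖τ‖]

lemma apply_selfCommutator (hτ : IsTracialState τ) (z : D) :
    τ (selfCommutator z) = 0 := by
  rw [selfCommutator, map_sub, hτ.2.2, sub_self]

lemma norm_apply_le_infDist {N : Type*} [NormedRing N] [StarRing N]
    [NormedAlgebra ℂ N] [StarModule ℂ N] [CStarRing N] {B : StarSubalgebra ℂ N}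
    {τ : B →L[ℂ] ℂ} (hτ : IsTracialState τ) (b : B) :
    ‖τ b‖ ≤ infDist (b : N) (Submodule.span ℝ (selfCommutator '' (B : Set N))) := by
  have hspan : Submodule.span ℝ (selfCommutator '' (B : Set N)) ≤
      (LinearMap.ker (τ.toLinearMap.restrictScalars ℝ)).map
        (B.subtype.toLinearMap.restrictScalars ℝ) :=
    Submodule.span_le.2 fun _ ⟨z, hz, hcz⟩ =>
      ⟨selfCommutator ⟨z, hz⟩, hτ.apply_selfCommutator _, hcz⟩
  refine (le_infDist ⟨0, zero_mem _⟩).2 fun y hy => ?_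
  obtain ⟨c, hc, rfl⟩ := hspan hy
  have hc : τ c = 0 := hc
  calc ‖τ b‖ = ‖τ (b - c)‖ := by rw [map_sub, hc, sub_zero]
    _ ≤ ‖b - c‖ := (τ.le_opNorm _).trans (mul_le_of_le_one_left (norm_nonneg _) hτ.opNorm_le_one)
    _ = dist (b : N) c := (dist_eq_norm b c).symm

end IsTracialState

section InfDist

variable {E : Type*} [NormedAddCommGroup E] [NormedSpace ℝ E] {K : Submodule ℝ E}

lemma Submodule.infDist_eq_norm_mkQ (K : Submodule ℝ E) (x : E) :
    infDist x K = ‖K.mkQ x‖ :=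
  (QuotientAddGroup.norm_mk (S := K.toAddSubgroup) x).symm

variable {G : Type*} [FunLike G E ℝ] [LinearMapClass G ℝ E ℝ] {g : G}

lemma apply_eq_zero_of_le_infDist (hg : ∀ x, g x ≤ infDist x K) {x : E} (hx : x ∈ K) :
    g x = 0 := by
  have h₁ := hg x
  have h₂ := hg (-x)
  rw [infDist_zero_of_mem hx] at h₁
  rw [infDist_zero_of_mem (neg_mem hx), map_neg] at h₂
  linarith

lemma abs_apply_le_norm_of_le_infDist (hg : ∀ x, g x ≤ infDist x K) (x : E) : |g x| ≤ ‖x‖ := by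
  have hle (y : E) : g y ≤ ‖y‖ := by
    simpa using (hg y).trans (infDist_le_dist_of_mem K.zero_mem)
  have := hle (-x)
  rw [map_neg, norm_neg] at this
  exact abs_le.2 ⟨by linarith, hle x⟩

lemma exists_extension_le_infDist {F : Type*} [AddCommGroup F] [Module ℝ F] (ι : F →ₗ[ℝ] E)
    (hι : Injective ι) (f : F →ₗ[ℝ] ℝ) (hf : ∀ y, f y ≤ infDist (ι y) K) :
    ∃ g : E →L[ℝ] ℝ, (∀ y, g (ι y) = f y) ∧ ∀ x, g x ≤ infDist x K := by
  let e := LinearEquiv.ofInjective ι hι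
  obtain ⟨g, hgf, hgK⟩ := exists_extension_of_le_sublinear
    ⟨LinearMap.range ι, f ∘ₗ e.symm.toLinearMap⟩ (fun x => infDist x K)
    (fun c hc x => by
      simp only [K.infDist_eq_norm_mkQ, map_smul, norm_smul, Real.norm_of_nonneg hc.le])
    (fun x y => by simpa only [K.infDist_eq_norm_mkQ, map_add] using norm_add_le _ _)
    (fun x => by simpa [e] using hf (e.symm x))
  refine ⟨g.mkContinuous 1 fun x => by simpa using abs_apply_le_norm_of_le_infDist hgK x,
    fun y => ?_, hgK⟩
  simpa [e] using hgf (e y)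

end InfDist

section Complexification

variable {N : Type*} [AddCommGroup N] [Module ℂ N] [TopologicalSpace N] [ContinuousConstSMul ℂ N]
  [StarAddMonoid N] [StarModule ℂ N] [ContinuousStar N]

lemma exists_complexDual_eq_on_selfAdjoint (g : N →L[ℝ] ℝ) :
    ∃ σ : N →L[ℂ] ℂ, ∀ a, IsSelfAdjoint a → σ a = g a := by
  -- the symmetrization `gs` agrees with `g` on self-adjoint and vanishes on skew-adjoint elements
  let gs : N →L[ℝ] ℝ := (2⁻¹ : ℝ) • (g + g.comp (starL' ℝ : N ≃L[ℝ] N).toContinuousLinearMap)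
  refine ⟨StrongDual.extendRCLike gs, fun a ha => ?_⟩
  have hskew : star (I • a) = -(I • a) := by
    rw [star_smul, ha.star_eq, Complex.star_def, conj_I, neg_smul]
  simp [StrongDual.extendRCLike_apply, gs, hskew, ha.star_eq]
  ring

end Complexification

section CStarAlgebra

variable {N : Type*} [CStarAlgebra N]

lemma apply_star_mul_self_nonneg {G : Type*} [FunLike G N ℝ] [LinearMapClass G ℝ N ℝ] {g : G}
    (hg1 : g 1 = 1) (hg : ∀ x, g x ≤ ‖x‖) (x : N) : 0 ≤ g (star x * x) := by
  let := CStarAlgebra.spectralOrder N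
  have := CStarAlgebra.spectralOrderedRing N
  set a := star x * x
  have ha : 0 ≤ a := star_mul_self_nonneg x
  have hgap : ‖algebraMap ℝ N ‖a‖ - a‖ ≤ ‖a‖ :=
    (CStarAlgebra.norm_le_iff_le_algebraMap _ (norm_nonneg a)
      (sub_nonneg.2 ha.isSelfAdjoint.le_algebraMap_norm_self)).2 (sub_le_self _ ha)
  have := (hg _).trans hgap
  rw [map_sub, Algebra.algebraMap_eq_smul_one, map_smul, hg1, smul_eq_mul, mul_one] at this
  linarith

lemma exists_isTracialState_of_le_infDist (g : N →L[ℝ] ℝ) (hg1 : g 1 = 1)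
    (hg : ∀ x, g x ≤ infDist x (Submodule.span ℝ (range (selfCommutator : N → N)))) :
    ∃ σ : N →L[ℂ] ℂ, IsTracialState σ ∧ ∀ a, IsSelfAdjoint a → σ a = g a := by
  obtain ⟨σ, hσ⟩ := exists_complexDual_eq_on_selfAdjoint g
  have hσ_selfCommutator (z : N) : σ (selfCommutator z) = 0 := by
    rw [hσ _ (isSelfAdjoint_selfCommutator z),
      apply_eq_zero_of_le_infDist hg (Submodule.subset_span ⟨z, rfl⟩), ofReal_zero]
  refine ⟨σ, ⟨?_, fun x => ?_, fun a b => ?_⟩, hσ⟩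
  · rw [hσ 1 (.one N), hg1, ofReal_one]
  · exact ⟨g (star x * x), apply_star_mul_self_nonneg hg1
      (fun y => (le_abs_self _).trans (abs_apply_le_norm_of_le_infDist hg y)) x,
      hσ _ (.star_mul_self x)⟩
  · have := congrArg σ (four_smul_commutator_eq a b)
    simp only [map_add, map_sub, map_smul, hσ_selfCommutator, smul_eq_mul] at this
    linear_combination this / 4

end CStarAlgebra

lemma Submodule.exists_finite_mem_span_image {R M α : Type*} [Semiring R] [AddCommMonoid M]
    [Module R M] {f : α → M} {c : M} (hc : c ∈ Submodule.span R (range f)) :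
    ∃ V : Set α, V.Finite ∧ c ∈ Submodule.span R (f '' V) := by
  obtain ⟨T, hT, hcT⟩ := Submodule.mem_span_finite_of_mem_span hc
  rw [← image_univ] at hT
  obtain ⟨V, -, hV, hcV⟩ := exists_subset_image_finite_and (p := (c ∈ Submodule.span R ·)).1
    ⟨T, hT, T.finite_toSet, hcT⟩
  exact ⟨V, hV, hcV⟩

lemma exists_countable_infDist_span_image_le {E α : Type*} [NormedAddCommGroup E]
    [NormedSpace ℝ E] (f : α → E) (x : E) :
    ∃ V : Set α, V.Countable ∧
      infDist x (Submodule.span ℝ (f '' V)) ≤ infDist x (Submodule.span ℝ (range f)) := by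
  have hne (s : Set E) : (Submodule.span ℝ s : Set E).Nonempty := ⟨0, zero_mem _⟩
  have happrox (n : ℕ) : ∃ V : Set α, V.Countable ∧ infDist x (Submodule.span ℝ (f '' V)) <
      infDist x (Submodule.span ℝ (range f)) + 1 / (n + 1) := by
    obtain ⟨c, hc, hxc⟩ := (infDist_lt_iff (hne _)).1 (lt_add_of_pos_right _ Nat.one_div_pos_of_nat)
    obtain ⟨V, hV, hcV⟩ := Submodule.exists_finite_mem_span_image hc
    exact ⟨V, hV.countable, (infDist_le_dist_of_mem hcV).trans_lt hxc⟩
  choose V hVc hV using happrox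
  refine ⟨⋃ n, V n, countable_iUnion hVc, le_of_forall_pos_lt_add fun ε hε => ?_⟩
  obtain ⟨n, hn⟩ := exists_nat_one_div_lt hε
  calc infDist x (Submodule.span ℝ (f '' ⋃ n, V n))
      ≤ infDist x (Submodule.span ℝ (f '' V n)) :=
        infDist_le_infDist_of_subset (Submodule.span_mono (image_mono (subset_iUnion V n))) (hne _)
    _ < _ := (hV n).trans (by linarith)

lemma Set.Countable.submonoid_closure {M : Type*} [Monoid M] {S : Set M} (hS : S.Countable) :
    (Submonoid.closure S : Set M).Countable := by
  have := hS.to_subtype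
  rw [Submonoid.closure_eq_mrange, MonoidHom.coe_mrange]
  exact countable_range _

section Adjoin

variable {R A : Type*} [CommSemiring R] [StarRing R] [TopologicalSpace R] [SeparableSpace R]
  [Semiring A] [StarRing A] [Algebra R A] [StarModule R A] [TopologicalSpace A]
  [ContinuousAdd A] [ContinuousSMul R A]

lemma Set.Countable.isSeparable_adjoin {S : Set A} (hS : S.Countable) :
    IsSeparable (StarAlgebra.adjoin R S : Set A) := by
  have hspan := congrArg (fun M : Submodule R A => (M : Set A))
    (StarAlgebra.adjoin_eq_span (R := R) S)
  simp only [Subalgebra.coe_toSubmodule, StarSubalgebra.coe_toSubalgebra] at hspan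
  rw [hspan]
  refine (hS.union ?_).submonoid_closure.isSeparable.span
  rw [← image_star]
  exact hS.image _

lemma exists_countable_saturated_superset (S₀ : Set A) (hS₀ : S₀.Countable)
    (V : A → Set A) (hV : ∀ x, (V x).Countable) :
    ∃ U : Set A, U.Countable ∧ S₀ ⊆ U ∧ (∀ x ∈ U, V x ⊆ U) ∧
      (StarAlgebra.adjoin R U : Set A) ⊆ closure U := by
  have hdense (S : Set A) (hS : S.Countable) :
      ∃ D : Set A, D.Countable ∧ (StarAlgebra.adjoin R S : Set A) ⊆ closure D :=
    hS.isSeparable_adjoin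
  choose! D hDc hD using hdense
  let S : ℕ → Set A := fun n => Nat.rec S₀ (fun _ T => T ∪ D T ∪ ⋃ x ∈ T, V x) n
  have hS_succ (n : ℕ) : S (n + 1) = S n ∪ D (S n) ∪ ⋃ x ∈ S n, V x := rfl
  have hSc (n : ℕ) : (S n).Countable := by
    induction n with
    | zero => exact hS₀
    | succ n ih => exact (ih.union (hDc _ ih)).union (ih.biUnion fun x _ => hV x)
  have hS_mono : Monotone S := monotone_nat_of_le_succ fun n => by
    rw [hS_succ]
    exact subset_union_left.trans subset_union_left
  refine ⟨⋃ n, S n, countable_iUnion hSc, subset_iUnion S 0, fun x hx => ?_, fun x hx => ?_⟩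
  · obtain ⟨n, hn⟩ := mem_iUnion.1 hx
    exact (subset_biUnion_of_mem hn).trans (subset_union_right.trans (subset_iUnion S (n + 1)))
  · have hmono : Monotone fun n => StarAlgebra.adjoin R (S n) :=
      fun _ _ h => StarAlgebra.adjoin_mono (hS_mono h)
    have hdir := hmono.directed_le
    have hle : StarAlgebra.adjoin R (⋃ n, S n) ≤ ⨆ n, StarAlgebra.adjoin R (S n) :=
      StarAlgebra.adjoin_le (iUnion_subset fun n =>
        (StarAlgebra.subset_adjoin R (S n)).trans (le_iSup (fun n => StarAlgebra.adjoin R (S n)) n))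
    have hx' := hle hx
    rw [← SetLike.mem_coe, StarSubalgebra.coe_iSup_of_directed hdir, mem_iUnion] at hx'
    obtain ⟨n, hn⟩ := hx'
    exact closure_mono ((subset_union_right.trans subset_union_left).trans
      (subset_iUnion S (n + 1))) (hD _ (hSc n) hn)

end Adjoin

lemma exists_isSeparable_starSubalgebra_infDist_le {A : Type*} [NormedRing A]
    [NormedAlgebra ℂ A] [StarRing A] [StarModule ℂ A] [ContinuousStar A] (f : A → A) {S : Set A}
    (hS : IsSeparable S) :
    ∃ B : StarSubalgebra ℂ A, IsClosed (B : Set A) ∧ IsSeparable (B : Set A) ∧ S ⊆ B ∧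
      ∀ x ∈ B, infDist x (Submodule.span ℝ (f '' B)) ≤
        infDist x (Submodule.span ℝ (range f)) := by
  obtain ⟨S₀, hS₀c, hS₀⟩ := hS
  choose V hVc hV using exists_countable_infDist_span_image_le f
  obtain ⟨U, hUc, hS₀U, hVU, hU⟩ :=
    exists_countable_saturated_superset (R := ℂ) S₀ hS₀c V hVc
  let B := (StarAlgebra.adjoin ℂ U).topologicalClosure
  have hB : (B : Set A) = closure U := by
    rw [StarSubalgebra.topologicalClosure_coe]
    exact subset_antisymm (closure_minimal hU isClosed_closure)
      (closure_mono (StarAlgebra.subset_adjoin ℂ U))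
  refine ⟨B, StarSubalgebra.isClosed_topologicalClosure _, hB ▸ hUc.isSeparable.closure,
    hB ▸ hS₀.trans (closure_mono hS₀U), fun x hx => ?_⟩
  rw [← SetLike.mem_coe, hB] at hx
  rw [hB]
  have hclosed : IsClosed {x | infDist x (Submodule.span ℝ (f '' closure U) : Set A) ≤
      infDist x (Submodule.span ℝ (range f) : Set A)} :=
    isClosed_le (continuous_infDist_pt _) (continuous_infDist_pt _)
  refine closure_minimal (fun y hy => ?_) hclosed hx
  exact (infDist_le_infDist_of_subset (Submodule.span_mono (image_mono
    ((hVU y hy).trans subset_closure))) ⟨0, zero_mem _⟩).trans (hV y)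

theorem exists_separable_intermediate_subalgebra_traces_extend_general
    (N : Type*) [CStarAlgebra N]
    (A : NonUnitalStarSubalgebra ℂ N)
    (hA_sep : TopologicalSpace.SeparableSpace A) :
    ∃ B : StarSubalgebra ℂ N, IsClosed (B : Set N) ∧
      TopologicalSpace.SeparableSpace B ∧ (A : Set N) ⊆ (B : Set N) ∧ (1 : N) ∈ B ∧
      ∀ τ : B →L[ℂ] ℂ, IsTracialState τ →
        ∃ σ : N →L[ℂ] ℂ, IsTracialState σ ∧ ∀ b : B, τ b = σ (b : N) := by
  have : SeparableSpace (A : Set N) := hA_sep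
  obtain ⟨B, hB_closed, hB_sep, hAB, hB⟩ :=
    exists_isSeparable_starSubalgebra_infDist_le selfCommutator (.of_subtype (A : Set N))
  refine ⟨B, hB_closed, hB_sep.separableSpace, hAB, one_mem B, fun τ hτ => ?_⟩
  obtain ⟨g, hgτ, hg⟩ := exists_extension_le_infDist (B.subtype.toLinearMap.restrictScalars ℝ)
    Subtype.val_injective (reLm.comp (τ.toLinearMap.restrictScalars ℝ))
    fun b => (re_le_norm _).trans ((hτ.norm_apply_le_infDist b).trans (hB b b.2))
  obtain ⟨σ, hσ, hσg⟩ := exists_isTracialState_of_le_infDist g (by simpa [hτ.1] using hgτ 1) hg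
  have hτσ (a : B) (ha : IsSelfAdjoint a) : τ a = σ a := by
    rw [hσg a (ha.map B.subtype), show g a = (τ a).re from hgτ a]
    exact Complex.ext rfl (by simp [hτ.im_apply_eq_zero ha])
  refine ⟨σ, hσ, fun b => ?_⟩
  rw [← realPart_add_I_smul_imaginaryPart b]
  simp only [map_add, map_smul, AddMemClass.coe_add, SetLike.val_smul,
    hτσ _ (ℜ b).2, hτσ _ (ℑ b).2]

/-- Given a unital C*-algebra `N` and a separable C*-subalgebra `A ⊆ N`, there exists a
separable C*-subalgebra `B` with `A ⊆ B ⊆ N` and `1 ∈ B` such that every tracial state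
on `B` is the restriction to `B` of a tracial state on `N`. -/
theorem exists_separable_intermediate_subalgebra_traces_extend
    (N : Type*) [CStarAlgebra N]
    (A : NonUnitalStarSubalgebra ℂ N) (hA_closed : IsClosed (A : Set N))
    (hA_sep : TopologicalSpace.SeparableSpace A) :
    ∃ B : StarSubalgebra ℂ N, IsClosed (B : Set N) ∧
      TopologicalSpace.SeparableSpace B ∧ (A : Set N) ⊆ (B : Set N) ∧ (1 : N) ∈ B ∧
      ∀ τ : B →L[ℂ] ℂ, IsTracialState τ →
        ∃ σ : N →L[ℂ] ℂ, IsTracialState σ ∧ ∀ b : B, τ b = σ (b : N) :=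
  exists_separable_intermediate_subalgebra_traces_extend_general N A hA_sep
end

section
/- Let N be a unital C*-algebra and let A be a separable C*-subalgebra of N containing the unit of N. Then there exists a separable C*-subalgebra B of N with A ⊆ B ⊆ N such that for every b ∈ B, the distance from b to the ℂ-linear span of the set of commutators {xy − yx : x, y ∈ B} equals the distance from b to the ℂ-linear span of the set of commutators {xy − yx : x, y ∈ N}. -/
/-- The ℂ-linear span of the commutators `x * y - y * x` with `x, y` ranging over a
subset `S` of a C*-algebra `N`. -/
noncomputable def commutatorSpan (N : Type*) [CStarAlgebra N] (S : Set N) : Submodule ℂ N :=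
  Submodule.span ℂ {z : N | ∃ x ∈ S, ∃ y ∈ S, z = x * y - y * x}

/-!
The distance from `b` to the commutator span of `N` is approximated by a sequence of finite
combinations of commutators, so it is already attained by the commutator span of a countable set.
Starting from a countable dense subset of `A`, repeatedly add a countable dense subset of the
generated *-algebra together with these countable witness sets for all points so far. After `ω`
steps the union `U` is countable, dense in the C*-algebra `B` it generates, and each of its points
has the same distance to the commutator spans of `B` and of `N`; as both distances are continuous,
this passes from `U` to its closure `B`.
-/

open TopologicalSpace Metric Set

theorem Set.Countable.submonoidClosure {M : Type*} [Monoid M] {s : Set M} (hs : s.Countable) :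
    (Submonoid.closure s : Set M).Countable := by
  have := hs.to_subtype
  rw [Submonoid.closure_eq_mrange, MonoidHom.coe_mrange]
  exact countable_range _

theorem Set.Countable.isSeparable_starAlgebraAdjoin {R A : Type*} [CommSemiring R] [StarRing R]
    [TopologicalSpace R] [SeparableSpace R] [Semiring A] [StarRing A] [Algebra R A]
    [StarModule R A] [TopologicalSpace A] [ContinuousAdd A] [ContinuousSMul R A] {s : Set A}
    (hs : s.Countable) : IsSeparable (StarAlgebra.adjoin R s : Set A) := by
  have hstar : (star s).Countable := hs.preimage star_injective
  have := congrArg SetLike.coe (StarAlgebra.adjoin_eq_span (R := R) s)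
  exact this ▸ (hs.union hstar).submonoidClosure.isSeparable.span

theorem StarAlgebra.coe_adjoin_iUnion_of_monotone {R A ι : Type*} [CommSemiring R] [StarRing R]
    [Semiring A] [StarRing A] [Algebra R A] [StarModule R A] [Preorder ι] [IsDirectedOrder ι]
    [Nonempty ι] {s : ι → Set A} (hs : Monotone s) :
    (adjoin R (⋃ i, s i) : Set A) = ⋃ i, (adjoin R (s i) : Set A) := by
  rw [← iSup_eq_iUnion, StarAlgebra.gc.l_iSup,
    StarSubalgebra.coe_iSup_of_directed (fun i j ↦ ?_)]
  exact (hs.directed_le i j).imp fun _ ⟨hi, hj⟩ ↦ ⟨adjoin_mono hi, adjoin_mono hj⟩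

theorem Metric.exists_countable_subset_infDist_eq {α : Type*} [PseudoMetricSpace α] (x : α)
    {S : Set α} (hS : S.Nonempty) :
    ∃ T ⊆ S, T.Countable ∧ T.Nonempty ∧ infDist x T = infDist x S := by
  have hlt (k : ℕ) : infDist x S < infDist x S + 1 / (k + 1) :=
    lt_add_of_pos_right _ (by positivity)
  choose z hzS hz using fun k : ℕ ↦ (infDist_lt_iff hS).1 (hlt k)
  refine ⟨range z, range_subset_iff.2 hzS, countable_range z, range_nonempty z,
    le_antisymm (le_of_forall_pos_lt_add fun ε hε ↦ ?_)
      (infDist_le_infDist_of_subset (range_subset_iff.2 hzS) (range_nonempty z))⟩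
  obtain ⟨k, hk⟩ := exists_nat_one_div_lt hε
  calc infDist x (range z) ≤ dist x (z k) := infDist_le_dist_of_mem (mem_range_self k)
    _ < infDist x S + 1 / (k + 1) := hz k
    _ < infDist x S + ε := by linarith

section

variable {N : Type*} [CStarAlgebra N]

theorem commutatorSpan_mono {s t : Set N} (h : s ⊆ t) :
    commutatorSpan N s ≤ commutatorSpan N t :=
  Submodule.span_mono fun _ ⟨x, hx, y, hy, hz⟩ ↦ ⟨x, h hx, y, h hy, hz⟩

theorem antitone_infDist_commutatorSpan (b : N) :
    Antitone fun S : Set N ↦ infDist b (commutatorSpan N S) := fun _ _ h ↦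
  infDist_le_infDist_of_subset (commutatorSpan_mono h) ⟨0, Submodule.zero_mem _⟩

theorem exists_finite_subset_mem_commutatorSpan {S : Set N} {z : N}
    (hz : z ∈ commutatorSpan N S) : ∃ F ⊆ S, F.Finite ∧ z ∈ commutatorSpan N F := by
  obtain ⟨T, hTS, hzT⟩ := Submodule.mem_span_finite_of_mem_span hz
  choose! x hx y hy hxy using fun w (hw : w ∈ (T : Set N)) ↦ hTS hw
  refine ⟨x '' T ∪ y '' T, union_subset (image_subset_iff.2 hx) (image_subset_iff.2 hy),
    (T.finite_toSet.image x).union (T.finite_toSet.image y), Submodule.span_mono ?_ hzT⟩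
  exact fun w hw ↦ ⟨x w, .inl (mem_image_of_mem x hw), y w, .inr (mem_image_of_mem y hw),
    hxy w hw⟩

theorem exists_countable_subset_subset_commutatorSpan {S T : Set N} (hT : T.Countable)
    (hTS : T ⊆ commutatorSpan N S) :
    ∃ F ⊆ S, F.Countable ∧ T ⊆ commutatorSpan N F := by
  choose! F hFS hF hzF using
    fun z (hz : z ∈ T) ↦ exists_finite_subset_mem_commutatorSpan (hTS hz)
  refine ⟨⋃ z ∈ T, F z, iUnion₂_subset hFS, hT.biUnion fun z hz ↦ (hF z hz).countable,
    fun z hz ↦ commutatorSpan_mono (subset_biUnion_of_mem hz) (hzF z hz)⟩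

theorem exists_countable_infDist_commutatorSpan_eq (b : N) :
    ∃ F : Set N, F.Countable ∧
      infDist b (commutatorSpan N F) = infDist b (commutatorSpan N univ) := by
  obtain ⟨T, hTS, hT, hT_ne, hbT⟩ :=
    exists_countable_subset_infDist_eq b ⟨0, (commutatorSpan N univ).zero_mem⟩
  obtain ⟨F, -, hF, hTF⟩ := exists_countable_subset_subset_commutatorSpan hT hTS
  exact ⟨F, hF, le_antisymm (hbT ▸ infDist_le_infDist_of_subset hTF hT_ne)
    (antitone_infDist_commutatorSpan b (subset_univ F))⟩

theorem exists_countable_superset_adjoin_subset_closure {s : Set N} (hs : s.Countable) :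
    ∃ t : Set N, t.Countable ∧ s ⊆ t ∧ (StarAlgebra.adjoin ℂ s : Set N) ⊆ closure t ∧
      ∀ b ∈ s, infDist b (commutatorSpan N t) ≤ infDist b (commutatorSpan N univ) := by
  obtain ⟨c, hc, hc_dense⟩ := hs.isSeparable_starAlgebraAdjoin (R := ℂ)
  choose F hF hF_dist using exists_countable_infDist_commutatorSpan_eq (N := N)
  refine ⟨s ∪ c ∪ ⋃ b ∈ s, F b, (hs.union hc).union (hs.biUnion fun b _ ↦ hF b),
    subset_union_left.trans subset_union_left,
    hc_dense.trans (closure_mono (subset_union_right.trans subset_union_left)), fun b hb ↦ ?_⟩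
  exact (antitone_infDist_commutatorSpan b
    ((subset_biUnion_of_mem hb).trans subset_union_right)).trans (hF_dist b).le

theorem exists_countable_superset_dense_adjoin_infDist_commutatorSpan_le {s : Set N}
    (hs : s.Countable) :
    ∃ U : Set N, U.Countable ∧ s ⊆ U ∧ (StarAlgebra.adjoin ℂ U : Set N) ⊆ closure U ∧
      ∀ b ∈ U, infDist b (commutatorSpan N U) ≤ infDist b (commutatorSpan N univ) := by
  choose next hnext hnext_sup hnext_dense hnext_dist using
    fun t : {t : Set N // t.Countable} ↦ exists_countable_superset_adjoin_subset_closure t.2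
  let D : ℕ → {t : Set N // t.Countable} :=
    fun n ↦ n.rec ⟨s, hs⟩ fun _ t ↦ ⟨next t, hnext t⟩
  have hD : Monotone fun n ↦ (D n).1 := monotone_nat_of_le_succ fun n ↦ hnext_sup (D n)
  have hD_sub (n : ℕ) : (D n).1 ⊆ ⋃ m, (D m).1 := subset_iUnion (fun m ↦ (D m).1) n
  refine ⟨⋃ n, (D n).1, countable_iUnion fun n ↦ (D n).2, hD_sub 0, ?_, ?_⟩
  · rw [StarAlgebra.coe_adjoin_iUnion_of_monotone hD]
    exact iUnion_subset fun n ↦ (hnext_dense (D n)).trans (closure_mono (hD_sub (n + 1)))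
  · simp only [mem_iUnion]
    rintro b ⟨n, hb⟩
    exact (antitone_infDist_commutatorSpan b (hD_sub (n + 1))).trans (hnext_dist (D n) b hb)

end

theorem exists_separable_intermediate_subalgebra_commutator_dist_eq_general
    (N : Type*) [CStarAlgebra N]
    (A : StarSubalgebra ℂ N)
    (hA_sep : TopologicalSpace.SeparableSpace A) :
    ∃ B : StarSubalgebra ℂ N, IsClosed (B : Set N) ∧
      TopologicalSpace.SeparableSpace B ∧ A ≤ B ∧
      ∀ b ∈ B,
        Metric.infDist b (commutatorSpan N (B : Set N) : Set N) =
          Metric.infDist b (commutatorSpan N (Set.univ : Set N) : Set N) := by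
  obtain ⟨c, hc, hAc⟩ := IsSeparable.of_subtype (A : Set N)
  obtain ⟨U, hU, hcU, hU_dense, hU_dist⟩ :=
    exists_countable_superset_dense_adjoin_infDist_commutatorSpan_le hc
  let B := (StarAlgebra.adjoin ℂ U).topologicalClosure
  have hB : (B : Set N) = closure U :=
    (closure_minimal hU_dense isClosed_closure).antisymm
      (closure_mono (StarAlgebra.subset_adjoin ℂ U))
  refine ⟨B, (StarAlgebra.adjoin ℂ U).isClosed_topologicalClosure,
    (hB ▸ hU.isSeparable.closure).separableSpace,
    fun a ha ↦ hB.ge (closure_mono hcU (hAc ha)), fun b hb ↦ ?_⟩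
  refine le_antisymm ?_ (antitone_infDist_commutatorSpan b (subset_univ _))
  have hU_le : U ⊆ {x | infDist x (commutatorSpan N B) ≤ infDist x (commutatorSpan N univ)} :=
    fun x hx ↦ (antitone_infDist_commutatorSpan x (subset_closure.trans hB.ge)).trans
      (hU_dist x hx)
  exact closure_minimal hU_le (isClosed_le (continuous_infDist_pt _) (continuous_infDist_pt _))
    (hB.le hb)

/-- Given a unital C*-algebra `N` and a separable C*-subalgebra `A ⊆ N` containing the
unit, there is a separable C*-subalgebra `B` with `A ⊆ B ⊆ N` such that for every
`b ∈ B`, the distance from `b` to the span of commutators of `B` equals the distance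
from `b` to the span of commutators of `N`. -/
theorem exists_separable_intermediate_subalgebra_commutator_dist_eq
    (N : Type*) [CStarAlgebra N]
    (A : StarSubalgebra ℂ N) (hA_closed : IsClosed (A : Set N))
    (hA_sep : TopologicalSpace.SeparableSpace A) :
    ∃ B : StarSubalgebra ℂ N, IsClosed (B : Set N) ∧
      TopologicalSpace.SeparableSpace B ∧ A ≤ B ∧
      ∀ b ∈ B,
        Metric.infDist b (commutatorSpan N (B : Set N) : Set N) =
          Metric.infDist b (commutatorSpan N (Set.univ : Set N) : Set N) :=
  exists_separable_intermediate_subalgebra_commutator_dist_eq_general N A hA_sep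
end

section
/- Let N be a unital C*-algebra and let B be a C*-subalgebra of N containing the unit of N. Suppose that for every b ∈ B, the distance from b to the closure of the ℂ-linear span of {xy − yx : x, y ∈ B} equals the distance from b to the closure of the ℂ-linear span of {xy − yx : x, y ∈ N}. Then every tracial state on B is the restriction to B of some tracial state on N. -/
/-!
A tracial state `τ` on `B` is a unital positive functional, so Cauchy–Schwarz in its GNS
space gives `‖τ‖ ≤ 1`. Since `τ` kills the commutators of `B`,
`|τ b| ≤ dist(b, [B, B]) = dist(b, [N, N])`, which is the norm of `b` in the seminormed
quotient `N ⧸ [N, N]`. By Hahn–Banach the functional induced by `τ` on the image of `B`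
extends contractively to `N ⧸ [N, N]`; pulled back to `N` it is unital, contractive and
vanishes on commutators, and a unital contractive functional on a C*-algebra is positive.
-/

open scoped ComplexOrder InnerProductSpace
open Complex

theorem isTracialState_iff {D : Type*} [NormedRing D] [StarRing D] [NormedAlgebra ℂ D]
    (τ : D →L[ℂ] ℂ) : IsTracialState τ ↔
      τ 1 = 1 ∧ (∀ x : D, 0 ≤ τ (star x * x)) ∧ ∀ a b : D, τ (a * b) = τ (b * a) := by
  refine and_congr_right' (and_congr_left' (forall_congr' fun x ↦ ?_))
  rw [RCLike.nonneg_iff_exists_ofReal]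
  exact exists_congr fun r ↦ and_congr_right' eq_comm

theorem exists_strongDual_comp_eq_of_norm_le {𝕜 V E : Type*} [RCLike 𝕜] [AddCommGroup V]
    [Module 𝕜 V] [SeminormedAddCommGroup E] [NormedSpace 𝕜 E] (J : V →ₗ[𝕜] E)
    (f : V →ₗ[𝕜] 𝕜) (hf : ∀ v, ‖f v‖ ≤ ‖J v‖) :
    ∃ g : StrongDual 𝕜 E, ‖g‖ ≤ 1 ∧ ∀ v, g (J v) = f v := by
  have hker : LinearMap.ker J ≤ LinearMap.ker f := fun v hv ↦ by
    simpa [LinearMap.mem_ker.mp hv] using hf v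
  let ψ : LinearMap.range J →ₗ[𝕜] 𝕜 :=
    (LinearMap.ker J).liftQ f hker ∘ₗ J.quotKerEquivRange.symm.toLinearMap
  have hψ (v : V) : ψ (J.rangeRestrict v) = f v := by
    change (LinearMap.ker J).liftQ f hker
      (J.quotKerEquivRange.symm ⟨J v, LinearMap.mem_range_self J v⟩) = f v
    rw [LinearMap.quotKerEquivRange_symm_apply_image]
    rfl
  have hψle (w : LinearMap.range J) : ‖ψ w‖ ≤ 1 * ‖w‖ := by
    obtain ⟨v, rfl⟩ := J.surjective_rangeRestrict w
    simpa [hψ] using hf v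
  obtain ⟨g, hg, hgn⟩ := exists_extension_norm_eq (LinearMap.range J) (ψ.mkContinuous 1 hψle)
  refine ⟨g, hgn ▸ LinearMap.mkContinuous_norm_le _ zero_le_one _, fun v ↦ ?_⟩
  simpa [hψ] using hg (J.rangeRestrict v)

section UnitalFunctional

variable {A : Type*} [CStarAlgebra A]

theorem norm_apply_le_of_apply_star_mul_self_nonneg (τ : A →L[ℂ] ℂ) (h1 : τ 1 = 1)
    (hpos : ∀ x : A, 0 ≤ τ (star x * x)) (a : A) : ‖τ a‖ ≤ ‖a‖ := by
  let _ := CStarAlgebra.spectralOrder A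
  have _ := CStarAlgebra.spectralOrderedRing A
  let f : A →ₚ[ℂ] ℂ := .mk₀ τ fun x hx ↦ by
    obtain ⟨y, rfl⟩ := CStarAlgebra.nonneg_iff_eq_star_mul_self.mp hx
    exact hpos y
  have hf (x : A) : f x = τ x := rfl
  have hnorm_sq (x : A) : ‖f.toPreGNS x‖ ^ 2 = ‖τ (star x * x)‖ := by
    simpa [hf] using congrArg norm (f.preGNS_norm_sq (f.toPreGNS x))
  refine le_of_pow_le_pow_left₀ two_ne_zero (norm_nonneg a) ?_
  calc ‖τ a‖ ^ 2 = ‖⟪f.toPreGNS 1, f.toPreGNS a⟫_ℂ‖ ^ 2 := by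
        simp [PositiveLinearMap.preGNS_inner_def, hf]
    _ ≤ ‖f.toPreGNS 1‖ ^ 2 * ‖f.toPreGNS a‖ ^ 2 := by
        rw [← mul_pow]; gcongr; exact norm_inner_le_norm _ _
    _ = ‖f (star a * a)‖ := by simp [hnorm_sq, h1, hf]
    _ ≤ ‖a‖ ^ 2 := by
        simpa [hf, h1, CStarRing.norm_star_mul_self, sq] using
          f.norm_apply_le_of_nonneg _ (star_mul_self_nonneg a)

theorem IsSelfAdjoint.norm_add_mul_I_smul_one_sq_le {a : A} (ha : IsSelfAdjoint a) (t : ℝ) :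
    ‖a + (t * I) • (1 : A)‖ ^ 2 ≤ ‖a‖ ^ 2 + t ^ 2 := by
  have hmul : star (a + (t * I) • (1 : A)) * (a + (t * I) • 1) = a * a + (t ^ 2 : ℂ) • 1 := by
    simp only [star_add, star_smul, star_one, ha.star_eq, Complex.star_def, map_mul, conj_I,
      conj_ofReal, add_mul, mul_add, smul_mul_assoc, mul_smul_comm, mul_one, one_mul]
    match_scalars <;> simp [Complex.ext_iff, pow_two]
  rw [sq, ← CStarRing.norm_star_mul_self, hmul]
  refine (norm_add_le _ _).trans ?_
  gcongr
  · rw [sq]; exact norm_mul_le a a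
  · rcases subsingleton_or_nontrivial A with _ | _
    · simpa [Subsingleton.elim (1 : A) 0] using sq_nonneg t
    · simp [norm_smul]

theorem im_apply_eq_zero_of_isSelfAdjoint (σ : A →L[ℂ] ℂ) (h1 : σ 1 = 1)
    (hle : ∀ z, ‖σ z‖ ≤ ‖z‖) {a : A} (ha : IsSelfAdjoint a) : (σ a).im = 0 := by
  have hbound (t : ℝ) : 2 * (σ a).im * t ≤ ‖a‖ ^ 2 := by
    have hσ : σ (a + (t * I) • (1 : A)) = σ a + t * I := by simp [h1]
    have hsq : ‖σ a + t * I‖ ^ 2 = (σ a).re ^ 2 + ((σ a).im + t) ^ 2 := by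
      rw [Complex.sq_norm, Complex.normSq_apply]; simp; ring
    have h := (pow_le_pow_left₀ (norm_nonneg _) (hle (a + (t * I) • (1 : A))) 2).trans
      (ha.norm_add_mul_I_smul_one_sq_le t)
    rw [hσ, hsq] at h
    nlinarith [sq_nonneg (σ a).re, sq_nonneg (σ a).im]
  by_contra h
  have := hbound ((‖a‖ ^ 2 + 1) / (2 * (σ a).im))
  rw [mul_div_cancel₀ _ (by positivity)] at this
  linarith

theorem apply_star_mul_self_nonneg_of_norm_apply_le (σ : A →L[ℂ] ℂ) (h1 : σ 1 = 1)
    (hle : ∀ z, ‖σ z‖ ≤ ‖z‖) (x : A) : 0 ≤ σ (star x * x) := by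
  let _ := CStarAlgebra.spectralOrder A
  have _ := CStarAlgebra.spectralOrderedRing A
  set a := star x * x
  have ha : 0 ≤ a := star_mul_self_nonneg x
  have hb : ‖algebraMap ℝ A ‖a‖ - a‖ ≤ ‖a‖ := by
    rw [CStarAlgebra.norm_le_iff_le_algebraMap _ (norm_nonneg a)
      (sub_nonneg.mpr ha.isSelfAdjoint.le_algebraMap_norm_self)]
    exact sub_le_self _ ha
  have hσb : σ (algebraMap ℝ A ‖a‖ - a) = ‖a‖ - σ a := by
    simp [Algebra.algebraMap_eq_smul_one, h1]
  have hre : ‖a‖ - (σ a).re ≤ ‖a‖ := by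
    simpa [hσb] using (Complex.re_le_norm _).trans ((hle _).trans hb)
  rw [Complex.nonneg_iff]
  exact ⟨by linarith, (im_apply_eq_zero_of_isSelfAdjoint σ h1 hle ha.isSelfAdjoint).symm⟩

theorem isTracialState_of_norm_apply_le (σ : A →L[ℂ] ℂ) (h1 : σ 1 = 1)
    (hle : ∀ z, ‖σ z‖ ≤ ‖z‖) (htr : ∀ a b, σ (a * b) = σ (b * a)) : IsTracialState σ :=
  (isTracialState_iff σ).mpr ⟨h1, apply_star_mul_self_nonneg_of_norm_apply_le σ h1 hle, htr⟩

end UnitalFunctional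

section Commutators

variable {N : Type*} [CStarAlgebra N]

theorem commutatorSpan_le_map_ker (B : StarSubalgebra ℂ N) (τ : B →ₗ[ℂ] ℂ)
    (htr : ∀ a b, τ (a * b) = τ (b * a)) :
    commutatorSpan N B ≤ (LinearMap.ker τ).map B.subtype.toLinearMap := by
  refine Submodule.span_le.mpr ?_
  rintro _ ⟨x, hx, y, hy, rfl⟩
  refine ⟨⟨x, hx⟩ * ⟨y, hy⟩ - ⟨y, hy⟩ * ⟨x, hx⟩, ?_, rfl⟩
  rw [SetLike.mem_coe, LinearMap.mem_ker, map_sub, htr, sub_self]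

theorem norm_apply_le_infDist_commutatorSpan (B : StarSubalgebra ℂ N) (τ : B →L[ℂ] ℂ)
    (hle : ∀ b, ‖τ b‖ ≤ ‖b‖) (htr : ∀ a b, τ (a * b) = τ (b * a)) (b : B) :
    ‖τ b‖ ≤ Metric.infDist (b : N) (commutatorSpan N B) := by
  refine (Metric.le_infDist ⟨0, zero_mem _⟩).mpr fun c hc ↦ ?_
  obtain ⟨c, hc0, rfl⟩ := commutatorSpan_le_map_ker B τ htr hc
  have hτc : τ c = 0 := hc0
  calc ‖τ b‖ = ‖τ (b - c)‖ := by rw [map_sub, hτc, sub_zero]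
    _ ≤ ‖b - c‖ := hle _
    _ = dist (b : N) c := (dist_eq_norm _ _).symm

end Commutators

/-- Let `N` be a unital C*-algebra and `B ⊆ N` a C*-subalgebra containing the unit such
that for every `b ∈ B`, the distance from `b` to the closure of the span of commutators
of `B` equals the distance from `b` to the closure of the span of commutators of `N`.
Then every tracial state on `B` extends to a tracial state on `N`. -/
theorem tracialState_extends_of_commutator_dist_eq
    (N : Type*) [CStarAlgebra N]
    (B : StarSubalgebra ℂ N) (hB_closed : IsClosed (B : Set N))
    (hdist : ∀ b ∈ B,
      Metric.infDist b (closure (commutatorSpan N (B : Set N) : Set N)) =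
        Metric.infDist b (closure (commutatorSpan N (Set.univ : Set N) : Set N))) :
    ∀ τ : B →L[ℂ] ℂ, IsTracialState τ →
      ∃ σ : N →L[ℂ] ℂ, IsTracialState σ ∧ ∀ b : B, τ b = σ (b : N) := by
  intro τ hτ
  obtain ⟨h1, hpos, htr⟩ := (isTracialState_iff τ).mp hτ
  -- registers `B` as a `CStarAlgebra`
  have : IsClosed (B : Set N) := hB_closed
  have hτle := norm_apply_le_of_apply_star_mul_self_nonneg τ h1 hpos
  set M := commutatorSpan N Set.univ
  have hτM (b : B) : ‖τ b‖ ≤ ‖M.mkQ b‖ :=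
    calc ‖τ b‖ ≤ Metric.infDist (b : N) (commutatorSpan N B) :=
          norm_apply_le_infDist_commutatorSpan B τ hτle htr b
      _ = Metric.infDist (b : N) M := by
          rw [← Metric.infDist_closure, hdist b b.2, Metric.infDist_closure]
      _ = ‖M.mkQ b‖ := (QuotientAddGroup.norm_mk (S := M.toAddSubgroup) _).symm
  obtain ⟨g, hg1, hg⟩ :=
    exists_strongDual_comp_eq_of_norm_le (M.mkQ ∘ₗ B.subtype.toLinearMap) τ hτM
  refine ⟨g ∘L M.mkQL, isTracialState_of_norm_apply_le _ ?_ ?_ ?_, fun b ↦ (hg b).symm⟩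
  · exact (hg 1).trans h1
  · exact fun z ↦ (g.le_of_opNorm_le hg1 _).trans (by simpa using Submodule.Quotient.norm_mk_le M z)
  · intro a b
    have hab : a * b - b * a ∈ M := Submodule.subset_span ⟨a, trivial, b, trivial, rfl⟩
    simp [(Submodule.Quotient.eq M).mpr hab]
end

section
/- Let B be a unital C*-algebra, let r be a positive integer, and let (Bₙ) be an increasing sequence of C*-subalgebras of B, each containing the unit of B, whose union is dense in B. Suppose that for every n, the set of r-tuples (x₁, …, x_r) ∈ (Bₙ)ʳ for which there exist y₁, …, y_r ∈ Bₙ with y₁x₁ + ⋯ + y_r x_r = 1 is dense in (Bₙ)ʳ. Then the set {(x₁, …, x_r) ∈ Bʳ : there exist y₁, …, y_r ∈ B with y₁x₁ + ⋯ + y_r x_r = 1} is dense in Bʳ. -/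
/-- `Lg r D` is the set of `r`-tuples of elements of a unital ring `D` which generate
`D` as a left ideal: the tuples `(x₁, …, x_r)` for which there are `y₁, …, y_r` with
`y₁ x₁ + ⋯ + y_r x_r = 1`.  Density of this set in `Dʳ` is Rieffel's characterization
of topological stable rank at most `r`. -/
def Lg (r : ℕ) (D : Type*) [Ring D] : Set (Fin r → D) :=
  {x | ∃ y : Fin r → D, ∑ i, y i * x i = 1}

/-!
A ring homomorphism maps `Lg_r` into `Lg_r`, so by continuity of the inclusion the closure
of `Lg_r(B)` contains every `(Bₙ)ʳ`. Since the `Bₙ` increase and `r` is finite,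
`⋃ₙ (Bₙ)ʳ = (⋃ₙ Bₙ)ʳ`, which is dense in `Bʳ`.
-/

open Set

theorem comp_mem_Lg {r : ℕ} {R S F : Type*} [Ring R] [Ring S] [FunLike F R S]
    [RingHomClass F R S] (f : F) {x : Fin r → R} (hx : x ∈ Lg r R) : f ∘ x ∈ Lg r S := by
  obtain ⟨y, hy⟩ := hx
  exact ⟨f ∘ y, by simpa using congrArg f hy⟩

theorem pi_range_subset_closure_Lg {r : ℕ} {R S F : Type*} [Ring R] [TopologicalSpace R]
    [Ring S] [TopologicalSpace S] [FunLike F R S] [RingHomClass F R S] (f : F)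
    (hf : Continuous f) (hR : Dense (Lg r R)) :
    univ.pi (fun _ : Fin r => range f) ⊆ closure (Lg r S) := by
  intro z hz
  choose x hx using fun i => hz i trivial
  have hmaps : MapsTo (fun x : Fin r → R => f ∘ x) (Lg r R) (Lg r S) := fun _ => comp_mem_Lg f
  have hfx : Continuous fun x : Fin r → R => f ∘ x :=
    continuous_pi fun i => hf.comp (continuous_apply i)
  rw [← funext hx]
  exact hmaps.closure hfx (hR x)

theorem lg_dense_of_increasing_union_general
    (B : Type*) [CStarAlgebra B] (r : ℕ)
    (C : ℕ → StarSubalgebra ℂ B)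
    (hC_mono : Monotone C)
    (hC_dense : Dense (⋃ n, (C n : Set B)))
    (hC_lg : ∀ n, Dense (Lg r (C n))) :
    Dense (Lg r B) := by
  have h_union : Dense (⋃ n, univ.pi fun _ : Fin r => (C n : Set B)) := by
    rw [iUnion_univ_pi_of_monotone fun _ _ _ h => hC_mono h]
    exact dense_pi _ fun _ _ => hC_dense
  refine dense_closure.mp (h_union.mono (iUnion_subset fun n => ?_))
  simpa using pi_range_subset_closure_Lg (C n).subtype continuous_subtype_val (hC_lg n)

/-- If a unital C*-algebra `B` is the closure of an increasing union of unital
C*-subalgebras `Bₙ` with `Lg_r(Bₙ)` dense in `(Bₙ)ʳ` for every `n`, then `Lg_r(B)` is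
dense in `Bʳ`. -/
theorem lg_dense_of_increasing_union
    (B : Type*) [CStarAlgebra B] (r : ℕ) (hr : 0 < r)
    (C : ℕ → StarSubalgebra ℂ B)
    (hC_closed : ∀ n, IsClosed (C n : Set B))
    (hC_mono : Monotone C)
    (hC_dense : Dense (⋃ n, (C n : Set B)))
    (hC_lg : ∀ n, Dense (Lg r (C n))) :
    Dense (Lg r B) :=
  lg_dense_of_increasing_union_general B r C hC_mono hC_dense hC_lg
end
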